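/- Let (Ω, ℱ, ℙ, σ) be a measure-preserving dynamical system, let f : Ω → ℋ generate a random circle homeomorphism, and let F be its standard lift. Then for every ω ∈ Ω, x ∈ ℝ and n ≥ 1, F^(n)_ω(x) = f̂^(n)_ω({x}) + Σ_{k=0}^{n−1} S_{σ^k ω}(f̂^(k)_ω({x})) + ⌊x⌋, where {x} = x − ⌊x⌋. -/

import Mathlib

open MeasureTheory

/-- Iterated composition of a random lift:
`iterLift σ F n ω = F_{σ^{n-1} ω} ∘ ⋯ ∘ F_{σ ω} ∘ F_ω`. -/
def iterLift {Ω : Type*} (σ : Ω → Ω) (F : Ω → ℝ → ℝ) : ℕ → Ω → ℝ → ℝ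
  | 0, _, x => x
  | n + 1, ω, x => iterLift σ F n (σ ω) (F ω x)

/-- Iterated composition of the induced interval maps `f̂_ω = Int.fract ∘ F_ω` on `[0,1)`:
`iterHat σ F n ω = f̂_{σ^{n-1} ω} ∘ ⋯ ∘ f̂_ω`. -/
noncomputable def iterHat {Ω : Type*} (σ : Ω → Ω) (F : Ω → ℝ → ℝ) : ℕ → Ω → ℝ → ℝ
  | 0, _, x => x
  | n + 1, ω, x => iterHat σ F n (σ ω) (Int.fract (F ω x))

/-- `S_ω`, the indicator function of the right interval `J_ω`, where
`J_ω = [c_ω, 1)` if `f̂_ω(0) ≠ 0` and `J_ω = ∅` if `f̂_ω(0) = 0`, and where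
`c_ω = f_ω⁻¹(0)` is described by the data `c : Ω → ℝ`. -/
noncomputable def rightInd {Ω : Type*} (F : Ω → ℝ → ℝ) (c : Ω → ℝ) (ω : Ω) : ℝ → ℝ :=
  Set.indicator (if Int.fract (F ω 0) ≠ 0 then Set.Ico (c ω) 1 else (∅ : Set ℝ)) fun _ => 1

/-!
Because `F_ω(x + 1) = F_ω(x) + 1`, the integer part of `x` passes through every lift
unchanged, so each step of the iteration only sees the lift on `[0, 1)`, where `⌊F_ω⌋` takes
the values `0` and `1`. For the standard lift `F_ω(0) ∈ [0, 1)`, and unless `F_ω(0) = 0` the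
lift crosses the integer `1` exactly at `c_ω`; hence `⌊F_ω⌋ = S_ω` on `[0, 1)`. Summing the
integer parts along the orbit gives the formula.
-/

section DegreeOne

variable {G : ℝ → ℝ} (hG : ∀ x, G (x + 1) = G x + 1)
include hG

theorem map_add_intCast_of_map_add_one (x : ℝ) (n : ℤ) : G (x + n) = G x + n := by
  have hper : Function.Periodic (fun x => G x - x) 1 := fun x => by simp only [hG]; ring
  have := hper.int_mul n x
  simp only [mul_one] at this
  linarith

theorem map_eq_map_fract_add_floor (x : ℝ) : G x = G (Int.fract x) + ⌊x⌋ := by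
  rw [← map_add_intCast_of_map_add_one hG, Int.fract_add_floor]

theorem fract_map_fract (x : ℝ) : Int.fract (G (Int.fract x)) = Int.fract (G x) := by
  rw [map_eq_map_fract_add_floor hG x, Int.fract_add_intCast]

theorem floor_map_eq_floor_map_fract_add_floor (x : ℝ) : ⌊G x⌋ = ⌊G (Int.fract x)⌋ + ⌊x⌋ := by
  rw [map_eq_map_fract_add_floor hG x, Int.floor_add_intCast]

end DegreeOne

section UnitInterval

variable {G : ℝ → ℝ} (hmono : StrictMono G) (hG : ∀ x, G (x + 1) = G x + 1)
  (hG0 : G 0 ∈ Set.Ico (0 : ℝ) 1)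
include hmono hG hG0

theorem map_eq_one_of_fract_eq_zero (hpos : 0 < G 0) {c : ℝ} (hc : c ∈ Set.Ico (0 : ℝ) 1)
    (hfc : Int.fract (G c) = 0) : G c = 1 := by
  obtain ⟨m, hm⟩ := Int.fract_eq_zero_iff.mp hfc
  have hlow : (0 : ℝ) < m := hm ▸ hpos.trans_le (hmono.monotone hc.1)
  have hhigh : (m : ℝ) < 2 := by
    have := hmono hc.2
    rw [← zero_add (1 : ℝ), hG, ← hm] at this
    linarith [hG0.2]
  have : m = 1 := by
    have : (0 : ℤ) < m := by exact_mod_cast hlow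
    have : m < 2 := by exact_mod_cast hhigh
    omega
  rw [← hm, this, Int.cast_one]

theorem floor_map_eq_indicator {c : ℝ} (hc : c ∈ Set.Ico (0 : ℝ) 1)
    (hfc : Int.fract (G c) = 0) {y : ℝ} (hy : y ∈ Set.Ico (0 : ℝ) 1) :
    (⌊G y⌋ : ℝ) = Set.indicator
      (if Int.fract (G 0) ≠ 0 then Set.Ico c 1 else (∅ : Set ℝ)) (fun _ => 1) y := by
  have hG1 : G 1 = G 0 + 1 := by simpa using hG 0
  have hlow : G 0 ≤ G y := hmono.monotone hy.1
  have hhigh : G y < G 0 + 1 := hG1 ▸ hmono hy.2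
  rw [Int.fract_eq_self.mpr hG0]
  by_cases h0 : G 0 = 0
  · have : ⌊G y⌋ = 0 := Int.floor_eq_zero_iff.mpr ⟨h0 ▸ hlow, by linarith⟩
    simp [h0, this]
  · have hpos : 0 < G 0 := lt_of_le_of_ne hG0.1 (Ne.symm h0)
    have hGc := map_eq_one_of_fract_eq_zero hmono hG hG0 hpos hc hfc
    simp only [ne_eq, h0, not_false_eq_true, if_true]
    by_cases hyc : c ≤ y
    · have hGy : 1 ≤ G y := hGc ▸ hmono.monotone hyc
      have : ⌊G y⌋ = 1 := Int.floor_eq_iff.mpr ⟨by simpa using hGy, by push_cast; linarith [hG0.2]⟩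
      simp [Set.indicator_of_mem (Set.mem_Ico.mpr ⟨hyc, hy.2⟩), this]
    · have hGy : G y < 1 := hGc ▸ hmono (not_le.mp hyc)
      have : ⌊G y⌋ = 0 := Int.floor_eq_zero_iff.mpr ⟨hG0.1.trans hlow, hGy⟩
      simp [Set.indicator_of_notMem (fun h : y ∈ Set.Ico c 1 => hyc h.1), this]

end UnitInterval

section Iterates

variable {Ω : Type*} (σ : Ω → Ω) (F : Ω → ℝ → ℝ)

theorem iterHat_mem_Ico (n : ℕ) (ω : Ω) {y : ℝ} (hy : y ∈ Set.Ico (0 : ℝ) 1) :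
    iterHat σ F n ω y ∈ Set.Ico (0 : ℝ) 1 := by
  induction n generalizing ω y with
  | zero => exact hy
  | succ n ih => exact ih (σ ω) ⟨Int.fract_nonneg _, Int.fract_lt_one _⟩

theorem iterLift_eq_iterHat_add_sum_floor (hdeg : ∀ ω x, F ω (x + 1) = F ω x + 1) (n : ℕ)
    (ω : Ω) (x : ℝ) :
    iterLift σ F n ω x = iterHat σ F n ω (Int.fract x)
      + (∑ k ∈ Finset.range n, (⌊F (σ^[k] ω) (iterHat σ F k ω (Int.fract x))⌋ : ℝ))
      + ⌊x⌋ := by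
  induction n generalizing ω x with
  | zero => simp [iterLift, iterHat]
  | succ n ih =>
    rw [iterLift, ih, Finset.sum_range_succ', floor_map_eq_floor_map_fract_add_floor (hdeg ω)]
    simp only [Function.iterate_succ_apply, Function.iterate_zero_apply, iterHat,
      fract_map_fract (hdeg ω), Int.cast_add]
    ring

end Iterates

theorem standard_lift_iterate_decomposition_general
    {Ω : Type*}
    (σ : Ω → Ω)
    (F : Ω → ℝ → ℝ)
    (hmono : ∀ ω, StrictMono (F ω))
    (hdeg : ∀ ω (x : ℝ), F ω (x + 1) = F ω x + 1)
    (hstd : ∀ ω, F ω 0 ∈ Set.Ico (0 : ℝ) 1)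
    (c : Ω → ℝ)
    (hc : ∀ ω, c ω ∈ Set.Ico (0 : ℝ) 1 ∧ Int.fract (F ω (c ω)) = 0) :
    ∀ (ω : Ω) (x : ℝ) (n : ℕ), 1 ≤ n →
      iterLift σ F n ω x = iterHat σ F n ω (Int.fract x)
        + (∑ k ∈ Finset.range n, rightInd F c (σ^[k] ω) (iterHat σ F k ω (Int.fract x)))
        + ⌊x⌋ := by
  intro ω x n _
  rw [iterLift_eq_iterHat_add_sum_floor σ F hdeg]
  congr 2
  refine Finset.sum_congr rfl fun k _ => ?_
  have hy := iterHat_mem_Ico σ F k ω ⟨Int.fract_nonneg x, Int.fract_lt_one x⟩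
  exact floor_map_eq_indicator (hmono _) (hdeg _) (hstd _) (hc _).1 (hc _).2 hy

/-- for the standard lift `F` of the generator of a random circle
homeomorphism over a measure-preserving system, for every `ω`, `x : ℝ` and `n ≥ 1`,
`F^{(n)}_ω(x) = f̂^{(n)}_ω({x}) + ∑_{k=0}^{n-1} S_{σ^k ω}(f̂^{(k)}_ω({x})) + ⌊x⌋`. -/
theorem standard_lift_iterate_decomposition
    {Ω : Type*} [MeasurableSpace Ω] (ℙ : MeasureTheory.Measure Ω)
    [MeasureTheory.IsProbabilityMeasure ℙ]
    (σ : Ω → Ω) (hσ : MeasureTheory.MeasurePreserving σ ℙ ℙ)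
    (F : Ω → ℝ → ℝ) (hmeas : Measurable (Function.uncurry F))
    (hmono : ∀ ω, StrictMono (F ω)) (hcont : ∀ ω, Continuous (F ω))
    (hsurj : ∀ ω, Function.Surjective (F ω))
    (hdeg : ∀ ω (x : ℝ), F ω (x + 1) = F ω x + 1)
    (hstd : ∀ ω, F ω 0 ∈ Set.Ico (0 : ℝ) 1)
    (c : Ω → ℝ)
    (hc : ∀ ω, c ω ∈ Set.Ico (0 : ℝ) 1 ∧ Int.fract (F ω (c ω)) = 0) :
    ∀ (ω : Ω) (x : ℝ) (n : ℕ), 1 ≤ n →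
      iterLift σ F n ω x = iterHat σ F n ω (Int.fract x)
        + (∑ k ∈ Finset.range n, rightInd F c (σ^[k] ω) (iterHat σ F k ω (Int.fract x)))
        + ⌊x⌋ :=
  standard_lift_iterate_decomposition_general σ F hmono hdeg hstd c hc
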